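/- Let f : S¹ → S¹ be an orientation-preserving homeomorphism with irrational rotation number whose non-wandering set NW(f) is a Cantor set. Then h_pol(f; NW(f)) = 1. -/

import Mathlib

open Filter TopologicalSpace Set

section PolyEntropy

variable {X : Type*} [PseudoMetricSpace X]

/-- The dynamic (Bowen) metric `d_n^f(x,y) = max_{0 ≤ k < n} d(f^k x, f^k y)`. -/
noncomputable def dynDist (f : X → X) (n : ℕ) (x y : X) : ℝ :=
  ⨆ k ∈ Finset.range n, dist (f^[k] x) (f^[k] y)

/-- `E` is `(n,ε)`-separated for `f`. -/
def IsDynSeparated (f : X → X) (n : ℕ) (ε : ℝ) (E : Set X) : Prop :=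
  ∀ x ∈ E, ∀ y ∈ E, x ≠ y → ε ≤ dynDist f n x y

/-- `sep(n,ε;Y)`: maximal cardinality of an `(n,ε)`-separated subset of `Y`. -/
noncomputable def sepCount (f : X → X) (Y : Set X) (n : ℕ) (ε : ℝ) : ℕ :=
  sSup {m | ∃ E : Finset X, ↑E ⊆ Y ∧ IsDynSeparated f n ε ↑E ∧ E.card = m}

/-- `span(n,ε;Y)`: minimal number of dynamic `ε`-balls covering `Y`. -/
noncomputable def spanCount (f : X → X) (Y : Set X) (n : ℕ) (ε : ℝ) : ℕ :=
  sInf {m | ∃ s : Finset X, s.card = m ∧ Y ⊆ ⋃ c ∈ s, {x | dynDist f n c x < ε}}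

/-- `cov(n,ε;Y)`: minimal number of sets of dynamic diameter `< ε` covering `Y`. -/
noncomputable def covCount (f : X → X) (Y : Set X) (n : ℕ) (ε : ℝ) : ℕ :=
  sInf {m | ∃ 𝒰 : Finset (Set X), 𝒰.card = m ∧
      (∀ U ∈ 𝒰, ∀ x ∈ U, ∀ y ∈ U, dynDist f n x y < ε) ∧ Y ⊆ ⋃₀ ↑𝒰}

/-- Polynomial entropy of `f` on the subset `Y`:
`lim_{ε→0} limsup_{n→∞} log sep(n,ε;Y) / log n` (the limit as `ε → 0⁺` being a
supremum over `ε > 0` by monotonicity). -/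
noncomputable def hpolOn (f : X → X) (Y : Set X) : EReal :=
  ⨆ ε : {ε : ℝ // 0 < ε},
    Filter.limsup (fun n : ℕ =>
      ((Real.log (sepCount f Y n ε) / Real.log n : ℝ) : EReal)) Filter.atTop

/-- Polynomial entropy of `f`. -/
noncomputable def hpol (f : X → X) : EReal := hpolOn f Set.univ

end PolyEntropy

section Hyperspace

variable {X : Type*} [TopologicalSpace X]

/-- The hyperspace `C(X)` of subcontinua (nonempty compact connected subsets) of `X`,
with the Hausdorff metric (inherited from `NonemptyCompacts X`). -/
def Subcontinua (X : Type*) [TopologicalSpace X] : Type _ :=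
  {A : NonemptyCompacts X // IsConnected (A : Set X)}

noncomputable instance {Y : Type*} [MetricSpace Y] : MetricSpace (Subcontinua Y) :=
  Subtype.metricSpace

instance : CoeSort (Subcontinua X) (Set X) := ⟨fun A => (A.1 : Set X)⟩

/-- The induced map `C(f) : C(X) → C(X)`, `A ↦ f(A)`. -/
def inducedC (f : X → X) (hf : Continuous f) : Subcontinua X → Subcontinua X :=
  fun A => ⟨⟨⟨f '' (A.1 : Set X), A.1.isCompact.image hf⟩, A.1.nonempty.image f⟩,
    A.2.image f hf.continuousOn⟩

/-- The induced map on the hyperspace of nonempty closed (= compact) subsets. -/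
def inducedNC {Y : Type*} [TopologicalSpace Y] (f : Y → Y) (hf : Continuous f) :
    NonemptyCompacts Y → NonemptyCompacts Y :=
  fun A => ⟨⟨f '' (A : Set Y), A.isCompact.image hf⟩, A.nonempty.image f⟩

end Hyperspace

section Circle

/-- `F : ℝ → ℝ` is an (orientation-preserving) lift of `f : S¹ → S¹`. -/
def IsLiftOf (F : ℝ → ℝ) (f : UnitAddCircle → UnitAddCircle) : Prop :=
  StrictMono F ∧ (∀ x, F (x + 1) = F x + 1) ∧ ∀ x : ℝ, f (x : UnitAddCircle) = (F x : UnitAddCircle)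

/-- `f` is an orientation-preserving circle map (has an increasing degree-one lift). -/
def OrientationPreserving (f : UnitAddCircle → UnitAddCircle) : Prop :=
  ∃ F : ℝ → ℝ, IsLiftOf F f

/-- `f` has Poincaré rotation number `ρ`. -/
def HasRotationNumber (f : UnitAddCircle → UnitAddCircle) (ρ : ℝ) : Prop :=
  ∃ F : ℝ → ℝ, IsLiftOf F f ∧
    Filter.Tendsto (fun n : ℕ => F^[n] 0 / n) Filter.atTop (nhds ρ)

/-- `f` is topologically conjugate to a rotation of the circle. -/
def ConjToRotation (f : UnitAddCircle → UnitAddCircle) : Prop :=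
  ∃ (φ : UnitAddCircle ≃ₜ UnitAddCircle) (a : UnitAddCircle), ∀ x, φ (f x) = φ x + a

/-- The non-wandering set of `f`. -/
def NW {X : Type*} [TopologicalSpace X] (f : X → X) : Set X :=
  {x | ∀ U ∈ nhds x, ∃ n : ℕ, 1 ≤ n ∧ (f^[n] '' U ∩ U).Nonempty}

/-- `C` is a Cantor set: nonempty, compact, perfect and totally disconnected. -/
def IsCantorSet {X : Type*} [TopologicalSpace X] (C : Set X) : Prop :=
  C.Nonempty ∧ IsCompact C ∧ Perfect C ∧ IsTotallyDisconnected C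

/-- The closed arc starting at `x`, going counterclockwise for length `t`. -/
noncomputable def arcFrom (x : UnitAddCircle) (t : ℝ) : Set UnitAddCircle :=
  (fun s : ℝ => x + (s : UnitAddCircle)) '' Set.Icc 0 t

end Circle

/-!
An `(n, ε)`-separated set has at most `n / ε + 1` points: list it in cyclic order; at each time
`k` the images of consecutive points cut the circle into arcs of total length one, while each
consecutive pair must be `ε` apart at some time `k < n`. So `h_pol ≤ 1` on every subset.

Conversely, let `b` be the right endpoint of a gap of the Cantor set `NW(f)`. If `f^m b` and
`f^{-m} b` were both close to `b`, they would lie just to the right of `b`, and the continuous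
Poincaré semiconjugacy to the rotation by `ρ` rules this out. Hence for a fixed `ε` the backward
orbit `b, f⁻¹ b, …, f^{-(n-1)} b` is `(n, ε)`-separated, so `sep(n, ε; NW(f)) ≥ n`.
-/

open Function Topology

section DynamicDistance

variable {X : Type*} [PseudoMetricSpace X] {f : X → X} {n : ℕ} {x y : X}

theorem dynDist_le {c : ℝ} (hc : 0 ≤ c) (h : ∀ k < n, dist (f^[k] x) (f^[k] y) ≤ c) :
    dynDist f n x y ≤ c :=
  Real.iSup_le (fun k => Real.iSup_le (fun hk => h k (Finset.mem_range.1 hk)) hc) hc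

theorem dist_iterate_le_dynDist {k : ℕ} (hk : k < n) :
    dist (f^[k] x) (f^[k] y) ≤ dynDist f n x y := by
  have hbdd : BddAbove (range fun j => ⨆ _ : j ∈ Finset.range n, dist (f^[j] x) (f^[j] y)) :=
    ⟨∑ j ∈ Finset.range n, dist (f^[j] x) (f^[j] y), forall_mem_range.2 fun j =>
      Real.iSup_le (fun hj => Finset.single_le_sum (f := fun j => dist (f^[j] x) (f^[j] y))
        (fun _ _ => dist_nonneg) hj)
        (Finset.sum_nonneg fun _ _ => dist_nonneg)⟩
  exact (ciSup_pos (Finset.mem_range.2 hk)).symm.le.trans (le_ciSup hbdd k)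

theorem dynDist_comm : dynDist f n x y = dynDist f n y x := by
  simp only [dynDist, dist_comm]

theorem le_dynDist_iff {ε : ℝ} (hε : 0 < ε) :
    ε ≤ dynDist f n x y ↔ ∃ k < n, ε ≤ dist (f^[k] x) (f^[k] y) := by
  refine ⟨fun h => ?_, fun ⟨k, hk, h⟩ => h.trans (dist_iterate_le_dynDist hk)⟩
  contrapose! h
  rcases (Finset.range n).eq_empty_or_nonempty with hn | hn
  · exact (dynDist_le le_rfl fun k hk => by simp_all).trans_lt hε
  · obtain ⟨j, hj, hmax⟩ :=
      (Finset.range n).exists_max_image (fun k => dist (f^[k] x) (f^[k] y)) hn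
    exact (dynDist_le dist_nonneg fun k hk => hmax k (Finset.mem_range.2 hk)).trans_lt
      (h j (Finset.mem_range.1 hj))

theorem le_dynDist_iterate_of_lt {g g' : X → X} (hg : LeftInverse g g') {b : X} {ε : ℝ}
    (h : ∀ m, 0 < m → ε ≤ dist b (g'^[m] b) ∨ ε ≤ dist (g^[m] b) b) {i j : ℕ} (hij : i < j)
    (hjn : j < n) : ε ≤ dynDist g n (g'^[i] b) (g'^[j] b) := by
  obtain ⟨m, rfl⟩ := Nat.exists_eq_add_of_lt hij
  have hi : g^[i] (g'^[i] b) = b := (hg.iterate i) b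
  rcases h (m + 1) m.succ_pos with hsep | hsep
  · refine hsep.trans (le_of_eq_of_le ?_ (dist_iterate_le_dynDist (k := i) (by omega)))
    rw [hi, add_assoc, iterate_add_apply g' i, (hg.iterate i)]
  · refine hsep.trans (le_of_eq_of_le ?_ (dist_iterate_le_dynDist (k := i + m + 1) hjn))
    rw [(hg.iterate (i + m + 1)) b, show i + m + 1 = m + 1 + i by omega,
      iterate_add_apply g (m + 1) i, hi]

end DynamicDistance

section SeparatedSets

variable {X : Type*} [PseudoMetricSpace X] {f : X → X} {Y : Set X} {n : ℕ} {ε B : ℝ}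

theorem bddAbove_card_isDynSeparated
    (h : ∀ E : Finset X, ↑E ⊆ Y → IsDynSeparated f n ε ↑E → (E.card : ℝ) ≤ B) :
    BddAbove {m | ∃ E : Finset X, ↑E ⊆ Y ∧ IsDynSeparated f n ε ↑E ∧ E.card = m} :=
  ⟨⌊B⌋₊, by rintro _ ⟨E, hEY, hE, rfl⟩; exact Nat.le_floor (h E hEY hE)⟩

theorem sepCount_le (h : ∀ E : Finset X, ↑E ⊆ Y → IsDynSeparated f n ε ↑E → (E.card : ℝ) ≤ B) :
    (sepCount f Y n ε : ℝ) ≤ B := by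
  obtain ⟨E, hEY, hE, hcard⟩ := Nat.sSup_mem
    (⟨0, ∅, by simp, by simp [IsDynSeparated], rfl⟩ :
      {m | ∃ E : Finset X, ↑E ⊆ Y ∧ IsDynSeparated f n ε ↑E ∧ E.card = m}.Nonempty)
    (bddAbove_card_isDynSeparated h)
  rw [sepCount, ← hcard]
  exact h E hEY hE

theorem card_le_sepCount
    (h : ∀ E : Finset X, ↑E ⊆ Y → IsDynSeparated f n ε ↑E → (E.card : ℝ) ≤ B)
    {E : Finset X} (hEY : ↑E ⊆ Y) (hE : IsDynSeparated f n ε ↑E) :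
    E.card ≤ sepCount f Y n ε :=
  le_csSup (bddAbove_card_isDynSeparated h) ⟨E, hEY, hE, rfl⟩

theorem le_sepCount_of_forall_le_dist_iterate {g g' : X → X} (hg : LeftInverse g g')
    (hY : MapsTo g' Y Y) {b : X} (hb : b ∈ Y) (hε : 0 < ε)
    (h : ∀ m, 0 < m → ε ≤ dist b (g'^[m] b) ∨ ε ≤ dist (g^[m] b) b)
    (hB : ∀ E : Finset X, ↑E ⊆ Y → IsDynSeparated g n ε ↑E → (E.card : ℝ) ≤ B) :
    n ≤ sepCount g Y n ε := by
  classical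
  have hsep : ∀ i < n, ∀ j < n, i ≠ j → ε ≤ dynDist g n (g'^[i] b) (g'^[j] b) := by
    intro i hi j hj hij
    rcases hij.lt_or_gt with hij | hij
    · exact le_dynDist_iterate_of_lt hg h hij hj
    · exact dynDist_comm (f := g) ▸ le_dynDist_iterate_of_lt hg h hij hi
  have hinj : InjOn (fun i => g'^[i] b) (Finset.range n) := by
    intro i hi j hj heq
    by_contra hij
    have := (hsep i (Finset.mem_range.1 hi) j (Finset.mem_range.1 hj) hij).trans
      (dynDist_le le_rfl fun k _ => by simp only [heq, dist_self, le_refl])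
    linarith
  have hcard := card_le_sepCount hB (E := (Finset.range n).image fun i => g'^[i] b)
    (by simpa [subset_def] using fun i _ => hY.iterate i hb) (by
      simp only [Finset.coe_image, Finset.coe_range, IsDynSeparated, mem_image, mem_Iio]
      rintro _ ⟨i, hi, rfl⟩ _ ⟨j, hj, rfl⟩ hne
      exact hsep i hi j hj fun hij => hne (hij ▸ rfl))
  rwa [Finset.card_image_of_injOn (by simpa using hinj), Finset.card_range] at hcard

theorem hpolOn_le_one
    (h : ∀ ε > 0, ∃ C, ∀ᶠ n : ℕ in atTop, (sepCount f Y n ε : ℝ) ≤ C * n) :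
    hpolOn f Y ≤ 1 := by
  refine iSup_le fun ⟨ε, hε⟩ => ?_
  obtain ⟨C, hC⟩ := h ε hε
  set C' := max C 1
  have hlim : Tendsto (fun n : ℕ => ((Real.log (C' * n) / Real.log n : ℝ) : EReal))
      atTop (𝓝 1) := by
    rw [← EReal.coe_one, EReal.tendsto_coe]
    have hlog := Real.tendsto_log_atTop.comp tendsto_natCast_atTop_atTop
    refine (by simpa using (tendsto_const_nhds (x := Real.log C')).div_atTop hlog |>.add_const 1 :
      Tendsto (fun n : ℕ => Real.log C' / Real.log n + 1) atTop (𝓝 1)).congr' ?_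
    filter_upwards [eventually_ge_atTop 2] with n hn
    have hn : (1 : ℝ) < n := by exact_mod_cast hn
    rw [Real.log_mul (by positivity) (by positivity), add_div, div_self (Real.log_pos hn).ne']
  refine (limsup_le_limsup ?_).trans hlim.limsup_eq.le
  filter_upwards [hC, eventually_ge_atTop 1] with n hn hn1
  have hn1 : (1 : ℝ) ≤ n := by exact_mod_cast hn1
  have hCn : (sepCount f Y n ε : ℝ) ≤ C' * n :=
    hn.trans (mul_le_mul_of_nonneg_right (le_max_left _ _) (by positivity))
  have hlog : Real.log (sepCount f Y n ε) ≤ Real.log (C' * n) := by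
    rcases (Nat.zero_le (sepCount f Y n ε)).eq_or_lt with h0 | hpos
    · rw [← h0, Nat.cast_zero, Real.log_zero]
      exact Real.log_nonneg (one_le_mul_of_one_le_of_one_le (le_max_right _ _) hn1)
    · exact Real.log_le_log (by exact_mod_cast hpos) hCn
  exact EReal.coe_le_coe_iff.2 (div_le_div_of_nonneg_right hlog (Real.log_nonneg hn1))

theorem one_le_hpolOn (hε : 0 < ε) (h : ∀ᶠ n : ℕ in atTop, (n : ℝ) ≤ sepCount f Y n ε) :
    1 ≤ hpolOn f Y := by
  refine le_trans ?_ (le_iSup _ (⟨ε, hε⟩ : {ε : ℝ // 0 < ε}))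
  refine le_limsup_of_frequently_le (Eventually.frequently ?_)
  filter_upwards [h, eventually_ge_atTop 2] with n hn hn2
  have hlog : 0 < Real.log n := Real.log_pos (by exact_mod_cast hn2)
  exact EReal.coe_le_coe_iff.2 ((one_le_div hlog).2 (Real.log_le_log (by positivity) hn))

end SeparatedSets

namespace UnitAddCircle

theorem coe_eq_coe_iff {s t : ℝ} : (s : UnitAddCircle) = t ↔ ∃ k : ℤ, s = t + k := by
  rw [← sub_eq_zero, ← AddCircle.coe_sub, AddCircle.coe_eq_zero_iff]
  simp only [zsmul_eq_mul, mul_one, eq_sub_iff_add_eq, eq_comm (a := s), add_comm]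

theorem dist_coe_le (s t : ℝ) : dist (s : UnitAddCircle) t ≤ |s - t| := by
  rw [dist_eq_norm, ← AddCircle.coe_sub, norm_eq]
  simpa using round_le (s - t) 0

theorem exists_eq_coe_abs_eq_norm (u : UnitAddCircle) : ∃ t : ℝ, u = t ∧ |t| = ‖u‖ := by
  obtain ⟨s, rfl⟩ := QuotientAddGroup.mk_surjective u
  exact ⟨s - round s, coe_eq_coe_iff.2 ⟨round s, by ring⟩, norm_eq.symm⟩

theorem coe_half_ne_zero : ((1 / 2 : ℝ) : UnitAddCircle) ≠ 0 := by
  intro h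
  have := AddCircle.norm_half_period_eq (1 : ℝ)
  rw [h, norm_zero] at this
  norm_num at this

theorem _root_.IsTotallyDisconnected.ne_univ_unitAddCircle {C : Set UnitAddCircle}
    (hC : IsTotallyDisconnected C) : C ≠ univ := by
  rintro rfl
  exact coe_half_ne_zero (hC univ subset_rfl isPreconnected_univ (mem_univ _) (mem_univ _))

theorem _root_.IsClosed.exists_mem_forall_sub_notMem {S : Set UnitAddCircle} (hS : IsClosed S)
    (hne : S.Nonempty) (hnu : S ≠ univ) :
    ∃ b ∈ S, ∃ ℓ > 0, ∀ s : ℝ, 0 < s → s < ℓ → b - s ∉ S := by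
  obtain ⟨z, hz⟩ := (ne_univ_iff_exists_notMem _).1 hnu
  set T : Set ℝ := Icc 0 1 ∩ (fun t : ℝ => z + t) ⁻¹' S
  have hTcl : IsClosed T :=
    isClosed_Icc.inter (hS.preimage (continuous_const.add (AddCircle.continuous_mk' 1)))
  have hTne : T.Nonempty := by
    obtain ⟨w, hw⟩ := hne
    obtain ⟨s, hs, hsw⟩ := AddCircle.eq_coe_Ico (w - z)
    exact ⟨s, ⟨hs.1, by simpa using hs.2.le⟩, by simpa [hsw] using hw⟩
  have hTbdd : BddBelow T := ⟨0, fun t ht => ht.1.1⟩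
  have ht₀ : sInf T ∈ T := hTcl.csInf_mem hTne hTbdd
  have ht₀pos : 0 < sInf T := ht₀.1.1.lt_of_ne fun h => hz (by simpa [← h] using ht₀.2)
  refine ⟨z + (sInf T : ℝ), ht₀.2, sInf T, ht₀pos, fun s hs hsT hmem => ?_⟩
  have hmem' : sInf T - s ∈ T := ⟨⟨by linarith, by linarith [ht₀.1.2]⟩, by
    simpa [AddCircle.coe_sub, add_sub_assoc] using hmem⟩
  linarith [csInf_le hTbdd hmem']

theorem exists_eq_add_of_dist_lt {S : Set UnitAddCircle} {b w : UnitAddCircle} {ℓ ε : ℝ}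
    (hgap : ∀ s : ℝ, 0 < s → s < ℓ → b - s ∉ S) (hεℓ : ε ≤ ℓ) (hw : w ∈ S) (hwb : w ≠ b)
    (hd : dist w b < ε) : ∃ t : ℝ, 0 < t ∧ t < ε ∧ w = b + t := by
  obtain ⟨t, ht, htn⟩ := exists_eq_coe_abs_eq_norm (w - b)
  have hw' : w = b + t := by rw [← ht]; abel
  have htε : |t| < ε := by rwa [htn, ← dist_eq_norm]
  rcases lt_trichotomy t 0 with hneg | rfl | hpos
  · refine (hgap (-t) (by linarith) (by linarith [abs_lt.1 htε]) ?_).elim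
    rwa [AddCircle.coe_neg, sub_neg_eq_add, ← hw']
  · exact absurd (by simpa using hw') hwb
  · exact ⟨t, hpos, (abs_lt.1 htε).2, hw'⟩

theorem exists_monotone_enum {E : Finset UnitAddCircle} {N : ℕ} (hE : E.card = N + 1) :
    ∃ r : ℕ → ℝ, Monotone r ∧ r N ≤ r 0 + 1 ∧ (∀ i, (r i : UnitAddCircle) ∈ E) ∧
      ∀ i < N, (r i : UnitAddCircle) ≠ r (i + 1) := by
  set e := AddCircle.equivIco (1 : ℝ) 0
  have hcard : (E.map e.toEmbedding).card = N + 1 := by rw [Finset.card_map, hE]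
  set σ := (E.map e.toEmbedding).orderIsoOfFin hcard
  let j : ℕ → Fin (N + 1) := fun i => ⟨min i N, by omega⟩
  have hσ : ∀ i, ((σ (j i) : Ico (0 : ℝ) (0 + 1)) : UnitAddCircle) = e.symm (σ (j i)) :=
    fun _ => rfl
  refine ⟨fun i => (σ (j i) : Ico (0 : ℝ) (0 + 1)), fun a b hab => ?_, ?_, fun i => ?_,
    fun i hi heq => ?_⟩
  · exact σ.monotone (show j a ≤ j b from Fin.mk_le_mk.2 (min_le_min_right N hab))
  · have h0 := (σ (j 0) : Ico (0 : ℝ) (0 + 1)).2.1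
    have hN := (σ (j N) : Ico (0 : ℝ) (0 + 1)).2.2
    simp only [zero_add] at hN
    linarith
  · obtain ⟨x, hx, hxe⟩ := Finset.mem_map.1 (σ (j i)).2
    rw [hσ, ← hxe]
    simpa using hx
  · rw [hσ, hσ] at heq
    have := congrArg Fin.val (σ.injective (Subtype.ext (e.symm.injective heq)))
    simp only [j] at this
    omega

theorem sum_dist_coe_le_one {G : ℝ → ℝ} (hG : Monotone G) (hG1 : ∀ x, G (x + 1) = G x + 1)
    {r : ℕ → ℝ} (hr : Monotone r) {N : ℕ} (hN : r N ≤ r 0 + 1) :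
    ∑ i ∈ Finset.range N, dist (G (r i) : UnitAddCircle) (G (r (i + 1))) ≤ 1 :=
  calc ∑ i ∈ Finset.range N, dist (G (r i) : UnitAddCircle) (G (r (i + 1)))
      ≤ ∑ i ∈ Finset.range N, (G (r (i + 1)) - G (r i)) := Finset.sum_le_sum fun i _ => by
        refine (dist_coe_le _ _).trans_eq ?_
        rw [abs_sub_comm, abs_of_nonneg (sub_nonneg.2 (hG (hr i.le_succ)))]
    _ = G (r N) - G (r 0) := Finset.sum_range_sub (G ∘ r) N
    _ ≤ 1 := by linarith [hG hN, hG1 (r 0)]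

end UnitAddCircle

section NonWandering

variable {X : Type*} [TopologicalSpace X]

theorem mapsTo_NW_of_commute {f g : X → X} (hg : Continuous g) (hfg : Function.Commute f g) :
    MapsTo g (NW f) (NW f) := by
  intro x hx U hU
  obtain ⟨n, hn, _, ⟨w, hw, rfl⟩, hwU⟩ := hx _ (hg.continuousAt.preimage_mem_nhds hU)
  exact ⟨n, hn, g (f^[n] w), ⟨g w, hw, (hfg.iterate_left n).eq w⟩, hwU⟩

theorem Homeomorph.mapsTo_NW (f : X ≃ₜ X) : MapsTo f (NW f) (NW f) :=
  mapsTo_NW_of_commute f.continuous (Function.Commute.refl _)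

theorem Homeomorph.mapsTo_symm_NW (f : X ≃ₜ X) : MapsTo f.symm (NW f) (NW f) :=
  mapsTo_NW_of_commute f.symm.continuous fun x => by simp

end NonWandering

namespace IsLiftOf

open CircleDeg1Lift

variable {F : ℝ → ℝ} {f : UnitAddCircle → UnitAddCircle} {Y : Set UnitAddCircle} {n : ℕ}
  {ε : ℝ}

theorem iterate (hF : IsLiftOf F f) (k : ℕ) : IsLiftOf F^[k] f^[k] := by
  refine ⟨hF.1.iterate k, fun x => ?_, fun x => ?_⟩
  · induction k with
    | zero => rfl
    | succ k ih => rw [iterate_succ_apply', ih, hF.2.1, iterate_succ_apply']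
  · induction k with
    | zero => rfl
    | succ k ih => rw [iterate_succ_apply', ih, hF.2.2, iterate_succ_apply']

def toCircleDeg1Lift (hF : IsLiftOf F f) : CircleDeg1Lift := ⟨⟨F, hF.1.monotone⟩, hF.2.1⟩

@[simp]
theorem coe_toCircleDeg1Lift (hF : IsLiftOf F f) : ⇑hF.toCircleDeg1Lift = F := rfl

theorem surjective (hF : IsLiftOf F f) (hf : Surjective f) : Surjective F := by
  intro y
  obtain ⟨u, hu⟩ := hf y
  obtain ⟨x, rfl⟩ := QuotientAddGroup.mk_surjective u
  obtain ⟨k, hk⟩ := UnitAddCircle.coe_eq_coe_iff.1 ((hF.2.2 x).symm.trans hu)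
  exact ⟨x - k, by rw [← coe_toCircleDeg1Lift hF, map_sub_int, coe_toCircleDeg1Lift, hk]; ring⟩

theorem translationNumber_eq {ρ : ℝ} (hF : IsLiftOf F f)
    (hρ : Tendsto (fun n : ℕ => F^[n] 0 / n) atTop (𝓝 ρ)) :
    hF.toCircleDeg1Lift.translationNumber = ρ :=
  translationNumber_eq_of_tendsto₀ _ (by simpa using hρ)

theorem iterate_ne_self (hF : IsLiftOf F f)
    (hirr : Irrational hF.toCircleDeg1Lift.translationNumber) {m : ℕ} (hm : 0 < m)
    (x : UnitAddCircle) : f^[m] x ≠ x := by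
  intro hx
  obtain ⟨r, rfl⟩ := QuotientAddGroup.mk_surjective x
  obtain ⟨k, hk⟩ := UnitAddCircle.coe_eq_coe_iff.1 (((hF.iterate m).2.2 r).symm.trans hx)
  have hτ := translationNumber_of_map_pow_eq_add_int (f := hF.toCircleDeg1Lift) (m := k)
    (by rw [coe_pow]; exact hk) hm
  exact hirr ⟨(k : ℚ) / m, by push_cast; exact hτ.symm⟩

theorem card_le_of_isDynSeparated (hF : IsLiftOf F f) (hε : 0 < ε) {E : Finset UnitAddCircle}
    (hE : IsDynSeparated f n ε ↑E) : (E.card : ℝ) ≤ n / ε + 1 := by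
  cases hN : E.card with
  | zero => simp only [Nat.cast_zero]; positivity
  | succ N =>
    obtain ⟨r, hr, hrN, hrE, hrne⟩ := UnitAddCircle.exists_monotone_enum hN
    choose k hk hεk using fun i (hi : i < N) =>
      (le_dynDist_iff hε).1 (hE _ (hrE i) _ (hrE (i + 1)) (hrne i hi))
    have hNε : N * ε ≤ n := calc
      N * ε = ∑ i ∈ Finset.range N, ε := by simp
      _ ≤ ∑ i ∈ Finset.range N, ∑ k ∈ Finset.range n,
          dist (f^[k] (r i)) (f^[k] (r (i + 1))) := Finset.sum_le_sum fun i hi =>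
        (hεk i (Finset.mem_range.1 hi)).trans <| Finset.single_le_sum
          (f := fun k => dist (f^[k] (r i)) (f^[k] (r (i + 1)))) (fun _ _ => dist_nonneg)
          (Finset.mem_range.2 (hk i _))
      _ = ∑ k ∈ Finset.range n, ∑ i ∈ Finset.range N,
          dist (f^[k] (r i)) (f^[k] (r (i + 1))) := Finset.sum_comm
      _ ≤ ∑ k ∈ Finset.range n, 1 := Finset.sum_le_sum fun k _ => by
        simpa only [(hF.iterate k).2.2] using UnitAddCircle.sum_dist_coe_le_one
          (hF.iterate k).1.monotone (hF.iterate k).2.1 hr hrN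
      _ = n := by simp
    push_cast
    linarith [(le_div_iff₀ hε).2 hNε]

theorem sepCount_le_div_add_one (hF : IsLiftOf F f) (hε : 0 < ε) :
    (sepCount f Y n ε : ℝ) ≤ n / ε + 1 :=
  sepCount_le fun _ _ hE => hF.card_le_of_isDynSeparated hε hE

theorem exists_continuous_semiconj (hF : IsLiftOf F f) (hf : Surjective f)
    (hirr : Irrational hF.toCircleDeg1Lift.translationNumber) :
    ∃ h : CircleDeg1Lift, Continuous h ∧
      Semiconj h F (· + hF.toCircleDeg1Lift.translationNumber) := by
  set ρ := hF.toCircleDeg1Lift.translationNumber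
  have hu : IsUnit hF.toCircleDeg1Lift :=
    isUnit_iff_bijective.2 ⟨hF.1.injective, hF.surjective hf⟩
  obtain ⟨h, hh⟩ := units_semiconj_of_translationNumber_eq (f₁ := hu.unit)
    (f₂ := translate (.ofAdd ρ)) (by rw [hu.unit_spec, translationNumber_translate])
  have hsemi : Semiconj h F (· + ρ) := fun x => by
    simpa [add_comm] using hh x
  refine ⟨h, h.monotone.continuous_of_denseRange ?_, hsemi⟩
  have hinv : ∀ s ∈ AddSubgroup.closure {ρ, 1}, ∀ y, y ∈ range h ↔ y + s ∈ range h := by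
    intro s hs
    induction hs using AddSubgroup.closure_induction with
    | mem s hs =>
      rcases hs with rfl | rfl
      · refine fun y => ⟨?_, ?_⟩
        · rintro ⟨x, rfl⟩
          exact ⟨F x, hsemi x⟩
        · rintro ⟨x, hx⟩
          obtain ⟨z, rfl⟩ := hF.surjective hf x
          exact ⟨z, by simpa [hsemi z] using hx⟩
      · refine fun y => ⟨?_, ?_⟩
        · rintro ⟨x, rfl⟩
          exact ⟨x + 1, h.map_add_one x⟩
        · rintro ⟨x, hx⟩
          exact ⟨x - 1, by simpa [hx] using h.map_sub_int x 1⟩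
    | zero => simp
    | add s t _ _ hs ht => intro y; rw [hs, ht, add_assoc]
    | neg s _ hs => intro y; rw [hs (y + -s), neg_add_cancel_right]
  have hdense : Dense (AddSubgroup.closure {ρ, 1} : Set ℝ) :=
    dense_addSubgroupClosure_pair_iff.2 (by simpa using hirr)
  refine ((Homeomorph.addLeft (h 0)).isDenseEmbedding.dense_image.2 hdense).mono ?_
  rintro _ ⟨s, hs, rfl⟩
  exact (hinv s hs (h 0)).1 ⟨0, rfl⟩

/-- The lift of `f^m` gains exactly one more turn on `β + s` than on `β`; the semiconjugacy turns
this into the identity. -/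
theorem semiconj_sub_add_sub_eq_one (hF : IsLiftOf F f) {h : CircleDeg1Lift} {ρ : ℝ}
    (hh : Semiconj h F (· + ρ)) {m : ℕ} {β s t : ℝ} (hs : 0 < s) (hs1 : s < 1) (ht : 0 < t)
    (ht1 : t < 1) (hfs : f^[m] (β + s : ℝ) = β) (hft : f^[m] β = (β + t : ℝ)) :
    (h (β + s) - h β) + (h (β + t) - h β) = 1 := by
  have hFm := hF.iterate m
  obtain ⟨K, hK⟩ := UnitAddCircle.coe_eq_coe_iff.1 ((hFm.2.2 _).symm.trans hfs)
  obtain ⟨K', hK'⟩ := UnitAddCircle.coe_eq_coe_iff.1 ((hFm.2.2 _).symm.trans hft)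
  have hlt : F^[m] β < F^[m] (β + s) := hFm.1 (by linarith)
  have hlt' : F^[m] (β + s) < F^[m] β + 1 := by
    rw [← hFm.2.1]; exact hFm.1 (by linarith)
  rw [hK, hK'] at hlt hlt'
  have hKK' : K = K' + 1 := by
    have h1 : K' < K := by exact_mod_cast (by linarith : (K' : ℝ) < K)
    have h2 : K < K' + 2 := by exact_mod_cast (by linarith : (K : ℝ) < K' + 2)
    omega
  have hhm : ∀ x, h (F^[m] x) = h x + m * ρ := by
    simpa only [add_right_iterate, nsmul_eq_mul] using (hh.iterate_right m).eq
  have e1 : h (β + s) + m * ρ = h β + K := by rw [← hhm, hK, h.map_add_int]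
  have e2 : h β + m * ρ = h (β + t) + K' := by rw [← hhm, hK', h.map_add_int]
  have hKK'ℝ : (K : ℝ) = K' + 1 := by exact_mod_cast hKK'
  linarith

end IsLiftOf

theorem exists_pos_forall_le_dist_iterate (f : UnitAddCircle ≃ₜ UnitAddCircle) {F : ℝ → ℝ}
    (hF : IsLiftOf F f) (hirr : Irrational hF.toCircleDeg1Lift.translationNumber)
    {S : Set UnitAddCircle} (hfS : MapsTo f S S) (hfS' : MapsTo f.symm S S) {b : UnitAddCircle}
    (hb : b ∈ S) {ℓ : ℝ} (hℓ : 0 < ℓ) (hgap : ∀ s : ℝ, 0 < s → s < ℓ → b - s ∉ S) :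
    ∃ ε > 0, ∀ m, 0 < m → ε ≤ dist b (f.symm^[m] b) ∨ ε ≤ dist (f^[m] b) b := by
  obtain ⟨h, hcont, hh⟩ := hF.exists_continuous_semiconj f.surjective hirr
  obtain ⟨β, rfl⟩ := QuotientAddGroup.mk_surjective b
  obtain ⟨δ, hδ, hδh⟩ := Metric.continuous_iff.1 hcont β (1 / 2) one_half_pos
  refine ⟨min ℓ (min δ (1 / 2)), by positivity, fun m hm => ?_⟩
  by_contra! hclose
  have hfp : f^[m] (f.symm^[m] β) = β := LeftInverse.iterate f.apply_symm_apply m _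
  obtain ⟨s, hs, hsε, hps⟩ := UnitAddCircle.exists_eq_add_of_dist_lt hgap (min_le_left _ _)
    (hfS'.iterate m hb) (fun heq => hF.iterate_ne_self hirr hm _ (by rwa [heq] at hfp))
    (by rw [dist_comm]; exact hclose.1)
  obtain ⟨t, ht, htε, hqt⟩ := UnitAddCircle.exists_eq_add_of_dist_lt hgap (min_le_left _ _)
    (hfS.iterate m hb) (hF.iterate_ne_self hirr hm _) hclose.2
  have hδ' : min ℓ (min δ (1 / 2)) ≤ δ := (min_le_right _ _).trans (min_le_left _ _)
  have hhalf : min ℓ (min δ (1 / 2)) ≤ 1 / 2 := (min_le_right _ _).trans (min_le_right _ _)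
  have hsum := hF.semiconj_sub_add_sub_eq_one hh hs (by linarith) ht (by linarith)
    (by rw [AddCircle.coe_add, ← hps, hfp]) (by rw [hqt, AddCircle.coe_add])
  have h1 := hδh (β + s) (by rw [Real.dist_eq, add_sub_cancel_left, abs_of_pos hs]; linarith)
  have h2 := hδh (β + t) (by rw [Real.dist_eq, add_sub_cancel_left, abs_of_pos ht]; linarith)
  rw [Real.dist_eq] at h1 h2
  linarith [abs_lt.1 h1, abs_lt.1 h2]

/-- irrational rotation number, Cantor non-wandering set:
`h_pol(f; NW(f)) = 1`. -/
theorem stmt_12 (f : UnitAddCircle ≃ₜ UnitAddCircle) (ρ : ℝ) (hirr : Irrational ρ)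
    (hρ : HasRotationNumber (f : UnitAddCircle → UnitAddCircle) ρ)
    (hC : IsCantorSet (NW (f : UnitAddCircle → UnitAddCircle))) :
    hpolOn (f : UnitAddCircle → UnitAddCircle)
      (NW (f : UnitAddCircle → UnitAddCircle)) = 1 := by
  obtain ⟨F, hF, hFρ⟩ := hρ
  rw [← hF.translationNumber_eq hFρ] at hirr
  obtain ⟨hne, hcpt, -, htd⟩ := hC
  obtain ⟨b, hb, ℓ, hℓ, hgap⟩ :=
    hcpt.isClosed.exists_mem_forall_sub_notMem hne htd.ne_univ_unitAddCircle
  obtain ⟨ε₀, hε₀, hsep⟩ :=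
    exists_pos_forall_le_dist_iterate f hF hirr f.mapsTo_NW f.mapsTo_symm_NW hb hℓ hgap
  refine le_antisymm (hpolOn_le_one fun ε hε => ⟨1 / ε + 1, ?_⟩)
    (one_le_hpolOn hε₀ (.of_forall fun n => ?_))
  · filter_upwards [eventually_ge_atTop 1] with n hn
    have hn : (1 : ℝ) ≤ n := by exact_mod_cast hn
    calc (sepCount f (NW f) n ε : ℝ) ≤ n / ε + 1 := hF.sepCount_le_div_add_one hε
      _ ≤ (1 / ε + 1) * n := by rw [add_mul, one_div_mul_eq_div]; linarith
  · exact_mod_cast le_sepCount_of_forall_le_dist_iterate f.apply_symm_apply f.mapsTo_symm_NW hb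
      hε₀ hsep fun _ _ hE => hF.card_le_of_isDynSeparated hε₀ hE
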